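/- Let k ≥ 2 be an integer and let M be a non-uniform matroid. Then M is k-connected if and only if M is vertically k-connected and has no circuits with fewer than k elements. -/

import Mathlib

open Set Matroid

universe u

variable {α : Type u}

/-- The rank of a set `X` in a matroid `M`: the supremum of the cardinalities of the
independent subsets of `X`. -/
noncomputable def mrk (M : Matroid α) (X : Set α) : ℕ∞ :=
  ⨆ I ∈ {I : Set α | M.Indep I ∧ I ⊆ X}, I.encard

/-- The rank `r(M)` of a matroid `M`. -/
noncomputable def mrank (M : Matroid α) : ℕ∞ := mrk M M.E

/-- The connectivity function `λ_M(X) = r(X) + r(E(M) - X) - r(M)`. -/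
noncomputable def lam (M : Matroid α) (X : Set α) : ℕ∞ :=
  mrk M X + mrk M (M.E \ X) - mrank M

/-- The deletion `M \ D` of a set of elements `D` from `M`. -/
def mdel (M : Matroid α) (D : Set α) : Matroid α := M ↾ (M.E \ D)

/-- A circuit of a matroid: a minimal dependent set. -/
def MCircuit (M : Matroid α) (C : Set α) : Prop := M.Dep C ∧ ∀ D, D ⊂ C → M.Indep D

/-- A cocircuit of a matroid: a circuit of the dual matroid. -/
def MCocircuit (M : Matroid α) (C : Set α) : Prop := MCircuit M✶ C

/-- A triangle: a 3-element circuit. -/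
def IsTriangle (M : Matroid α) (T : Set α) : Prop := MCircuit M T ∧ T.encard = 3

/-- `(X, Y)` is a vertical `j`-separation of `M`: a partition of `E(M)` with
`λ_M(X) < j` and `min {r(X), r(Y)} ≥ j`. -/
def IsVSep (M : Matroid α) (j : ℕ) (X Y : Set α) : Prop :=
  X ∪ Y = M.E ∧ Disjoint X Y ∧ lam M X < (j : ℕ∞) ∧
    (j : ℕ∞) ≤ mrk M X ∧ (j : ℕ∞) ≤ mrk M Y

/-- An exact vertical `j`-separation: one with `λ_M(X) = j - 1`. -/
def IsExactVSep (M : Matroid α) (j : ℕ) (X Y : Set α) : Prop :=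
  IsVSep M j X Y ∧ lam M X = (j : ℕ∞) - 1

/-- `M` is vertically `k`-connected: it has no vertical `j`-separation for a
positive integer `j < k`. -/
def VertConn (M : Matroid α) (k : ℕ) : Prop :=
  ∀ j X Y, 0 < j → j < k → ¬ IsVSep M j X Y

/-- `(X, Y)` is a (Tutte) `j`-separation of `M`. -/
def IsSep (M : Matroid α) (j : ℕ) (X Y : Set α) : Prop :=
  X ∪ Y = M.E ∧ Disjoint X Y ∧ lam M X < (j : ℕ∞) ∧
    (j : ℕ∞) ≤ X.encard ∧ (j : ℕ∞) ≤ Y.encard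

/-- `M` is (Tutte) `k`-connected. -/
def TConn (M : Matroid α) (k : ℕ) : Prop :=
  ∀ j X Y, 0 < j → j < k → ¬ IsSep M j X Y

/-- `M` is minimally vertically 4-connected. -/
def MinVertConn4 (M : Matroid α) : Prop :=
  VertConn M 4 ∧ ∀ e ∈ M.E, ¬ VertConn (mdel M {e}) 4

/-- `M` is a simple matroid: every subset of the ground set with at most two
elements is independent (no loops and no parallel pairs). -/
def MSimple (M : Matroid α) : Prop := ∀ S ⊆ M.E, S.encard ≤ 2 → M.Indep S

/-- `M` has a restriction isomorphic to `U_{2,4}`: a 4-element subset of the ground set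
of rank 2, all of whose subsets with at most 2 elements are independent. -/
def HasU24Restriction (M : Matroid α) : Prop :=
  ∃ X ⊆ M.E, X.encard = 4 ∧ mrk M X = 2 ∧ ∀ S ⊆ X, S.encard ≤ 2 → M.Indep S

/-- The restriction `M|X` is isomorphic to `U_{2,4}`. -/
def RestrIsoU24 (M : Matroid α) (X : Set α) : Prop :=
  X ⊆ M.E ∧ X.encard = 4 ∧ mrk M X = 2 ∧ ∀ S ⊆ X, S.encard ≤ 2 → M.Indep S

/-- The restriction `M|C` is isomorphic to `U_{2,k} ⊕ U_{2,2}`: `C` is the disjoint union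
of a `k`-element rank-2 set `L` containing no loops or parallel pairs (a copy of `U_{2,k}`)
and a 2-element independent set `P` (a copy of `U_{2,2}`), with `r(C) = r(L) + r(P) = 4`,
so that the restriction is the direct sum of the two pieces. -/
def RestrIsoLinePlusPair (M : Matroid α) (C : Set α) (k : ℕ) : Prop :=
  ∃ L P, C = L ∪ P ∧ Disjoint L P ∧ L.encard = (k : ℕ∞) ∧ P.encard = 2 ∧
    M.Indep P ∧ mrk M L = 2 ∧ (∀ S ⊆ L, S.encard ≤ 2 → M.Indep S) ∧ mrk M C = 4

/-- The restriction `M|X` is isomorphic to the 2-sum `U_{2,4} ⊕₂ U_{2,4}`: `X` is the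
disjoint union of two 3-element circuits `T₁` and `T₂`, and the circuits of `M` contained
in `X` (i.e. the circuits of `M|X`) are exactly `T₁`, `T₂`, and the unions `P₁ ∪ P₂` of
2-element subsets `P₁ ⊆ T₁` and `P₂ ⊆ T₂`. -/
def RestrIsoTwoSumU24U24 (M : Matroid α) (X : Set α) : Prop :=
  X ⊆ M.E ∧ ∃ T₁ T₂ : Set α, Disjoint T₁ T₂ ∧ X = T₁ ∪ T₂ ∧
    T₁.encard = 3 ∧ T₂.encard = 3 ∧
    ∀ C ⊆ X, (MCircuit M C ↔ (C = T₁ ∨ C = T₂ ∨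
      ∃ P₁ P₂, P₁ ⊆ T₁ ∧ P₂ ⊆ T₂ ∧ P₁.encard = 2 ∧ P₂.encard = 2 ∧ C = P₁ ∪ P₂))

/-- The columns of the `GF(3)`-matrix representing `N₉`. -/
def N9Cols : Fin 9 → Fin 4 → ZMod 3 :=
  ![![1, 0, 0, 0], ![0, 1, 0, 0], ![0, 0, 1, 0], ![0, 0, 0, 1], ![0, 1, 1, -1],
    ![1, 0, 1, 1], ![1, 1, 0, 1], ![-1, 1, 1, 0], ![1, -1, 1, -1]]

/-- `M` is isomorphic to `N₉`, the 9-element rank-4 matroid represented over `GF(3)`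
by the matrix with columns `N9Cols`. -/
def IsoN9 (M : Matroid α) : Prop :=
  ∃ φ : α → Fin 9, Set.BijOn φ M.E Set.univ ∧
    ∀ I ⊆ M.E, (M.Indep I ↔ LinearIndependent (ZMod 3) fun x : I => N9Cols (φ x.1))

/-- `M` is binary: representable over the two-element field `GF(2)`, i.e. there is a
map from the ground set to a `GF(2)`-vector space under which independence in `M`
coincides with linear independence. -/
def IsBinary (M : Matroid α) : Prop :=
  ∃ (ι : Type u) (φ : α → ι → ZMod 2),
    ∀ I ⊆ M.E, (M.Indep I ↔ LinearIndependent (ZMod 2) fun x : I => φ x.1)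

/-- `M` is a uniform matroid, i.e. isomorphic to `U_{m,n}` for some `m` and `n`:
the ground set has `n` elements and a subset of the ground set is independent
exactly when it has at most `m` elements. -/
def IsUniform (M : Matroid α) : Prop :=
  ∃ m n : ℕ, M.E.encard = (n : ℕ∞) ∧ ∀ I ⊆ M.E, (M.Indep I ↔ I.encard ≤ (m : ℕ∞))

/-! A vertical separation is a Tutte separation because `r(X) ≤ |X|`, and conversely a side `X`
of a `j`-separation with `r(X) < j ≤ |X|` contains a circuit with at most `j` elements.
A circuit `C` with `|C| < k` has `λ(C) ≤ r(C) < |C|`, so it is one side of a `|C|`-separation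
as soon as `|E − C| ≥ |C|`. Non-uniformity guarantees this: a finite non-uniform matroid has a
dependent non-spanning set `X`, for which `λ(X) < min(|X|, |E − X|)`, so `k`-connectivity forces
`2k ≤ 2(λ(X) + 1) ≤ |E|`. -/

section

variable {M : Matroid α} {X C : Set α} {k : ℕ}

lemma mrk_eq_eRk (M : Matroid α) (X : Set α) : mrk M X = M.eRk X := by
  refine le_antisymm (iSup₂_le fun I hI => hI.1.encard_le_eRk_of_subset hI.2) ?_
  obtain ⟨I, hI⟩ := M.exists_isBasis' X
  rw [← hI.encard_eq_eRk]
  exact le_iSup₂ (f := fun I (_ : I ∈ {I : Set α | M.Indep I ∧ I ⊆ X}) => I.encard) I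
    ⟨hI.indep, hI.subset⟩

lemma lam_eq_eRk (M : Matroid α) (X : Set α) :
    lam M X = M.eRk X + M.eRk (M.E \ X) - M.eRank := by
  rw [lam, mrank, mrk_eq_eRk, mrk_eq_eRk, mrk_eq_eRk, eRk_ground]

lemma mCircuit_iff_isCircuit : MCircuit M C ↔ M.IsCircuit C := by
  rw [isCircuit_iff_forall_ssubset]
  rfl

lemma lam_le_eRk (M : Matroid α) (X : Set α) : lam M X ≤ M.eRk X := by
  rw [lam_eq_eRk, tsub_le_iff_right]
  gcongr
  exact M.eRk_le_eRank _

lemma lam_lt_encard_sdiff (hfin : (M.E \ X).Finite) (hX : M.eRk X < M.eRank) :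
    lam M X < (M.E \ X).encard := by
  have hfin' : (M.E \ X).encard ≠ ⊤ := hfin.encard_lt_top.ne
  have hle : M.eRank ≤ M.eRk X + (M.E \ X).encard := by
    rw [← eRk_ground]
    calc M.eRk M.E ≤ M.eRk (X ∪ (M.E \ X)) := M.eRk_mono (by simp)
      _ ≤ _ := M.eRk_union_le_eRk_add_encard _ _
  have htop : M.eRank ≠ ⊤ :=
    ne_top_of_le_ne_top (WithTop.add_ne_top.2 ⟨hX.ne_top, hfin'⟩) hle
  calc lam M X ≤ M.eRk X + (M.E \ X).encard - M.eRank := by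
        rw [lam_eq_eRk]; gcongr; exact M.eRk_le_encard _
    _ < (M.E \ X).encard := by
      rw [(ENat.addLECancellable_of_ne_top htop).tsub_lt_iff_right hle, add_comm]
      exact (ENat.add_lt_add_iff_left hfin').2 hX

lemma TConn.le_lam_add_one (h : TConn M k) (hXE : X ⊆ M.E) (hX : lam M X < X.encard)
    (hXc : lam M X < (M.E \ X).encard) : (k : ℕ∞) ≤ lam M X + 1 := by
  obtain ⟨l, hl⟩ : ∃ l : ℕ, (l : ℕ∞) = lam M X := ⟨_, ENat.natCast_toNat hX.ne_top⟩
  rw [← hl] at hX hXc ⊢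
  by_contra! hlt
  exact h (l + 1) X (M.E \ X) l.succ_pos (by exact_mod_cast hlt)
    ⟨union_sdiff_cancel hXE, disjoint_sdiff_right, by rw [← hl]; exact_mod_cast l.lt_succ_self,
      by exact_mod_cast Order.add_one_le_of_lt hX, by exact_mod_cast Order.add_one_le_of_lt hXc⟩

lemma exists_dep_eRk_lt_eRank (hE : M.E.Finite) (hu : ¬ IsUniform M) :
    ∃ X ⊆ M.E, M.Dep X ∧ M.eRk X < M.eRank := by
  by_contra! h
  obtain ⟨m, hm⟩ : ∃ m : ℕ, (m : ℕ∞) = M.eRank :=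
    ⟨_, ENat.natCast_toNat (M.eRank_le_encard_ground.trans_lt hE.encard_lt_top).ne⟩
  refine hu ⟨m, M.E.encard.toNat, (ENat.natCast_toNat hE.encard_lt_top.ne).symm,
    fun I hI => ⟨fun hi => hm ▸ hi.encard_le_eRank, fun hIm => ?_⟩⟩
  by_contra hnot
  have hdep : M.Dep I := (not_indep_iff hI).1 hnot
  exact (h I hI hdep).not_gt
    ((eRk_lt_encard_of_dep_of_finite (hE.subset hI) hdep).trans_le (hm ▸ hIm))

lemma TConn.two_mul_le_encard_ground (h : TConn M k) (hu : ¬ IsUniform M) :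
    2 * (k : ℕ∞) ≤ M.E.encard := by
  obtain hE | hE := M.E.finite_or_infinite
  swap
  · simp [hE.encard_eq]
  obtain ⟨X, hXE, hXdep, hXr⟩ := exists_dep_eRk_lt_eRank hE hu
  have hX : lam M X < X.encard :=
    (lam_le_eRk M X).trans_lt (eRk_lt_encard_of_dep_of_finite (hE.subset hXE) hXdep)
  have hXc : lam M X < (M.E \ X).encard := lam_lt_encard_sdiff hE.sdiff hXr
  calc 2 * (k : ℕ∞) ≤ (lam M X + 1) + (lam M X + 1) := by
        rw [two_mul]; gcongr <;> exact h.le_lam_add_one hXE hX hXc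
    _ ≤ X.encard + (M.E \ X).encard :=
        add_le_add (Order.add_one_le_of_lt hX) (Order.add_one_le_of_lt hXc)
    _ = M.E.encard := by rw [add_comm, encard_sdiff_add_encard_of_subset hXE]

lemma TConn.le_encard_of_isCircuit (h : TConn M k) (hu : ¬ IsUniform M) (hC : M.IsCircuit C) :
    (k : ℕ∞) ≤ C.encard := by
  by_contra! hCk
  have hlam : lam M C < C.encard := (lam_le_eRk M C).trans_lt
    (eRk_lt_encard_of_dep_of_finite (finite_of_encard_le_coe hCk.le) hC.dep)
  have hCc : C.encard ≤ (M.E \ C).encard := by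
    by_contra! hlt
    have hE := h.two_mul_le_encard_ground hu
    rw [← encard_sdiff_add_encard_of_subset hC.subset_ground, two_mul] at hE
    exact hE.not_gt (ENat.add_lt_add (hlt.trans hCk) hCk)
  exact (h.le_lam_add_one hC.subset_ground hlam (hlam.trans_le hCc)).not_gt
    ((Order.add_one_le_of_lt hlam).trans_lt hCk)

lemma TConn.vertConn (h : TConn M k) : VertConn M k :=
  fun j X Y hj hjk ⟨hXY, hdisj, hlam, hX, hY⟩ => h j X Y hj hjk
    ⟨hXY, hdisj, hlam, hX.trans ((mrk_eq_eRk M X).trans_le (M.eRk_le_encard X)),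
      hY.trans ((mrk_eq_eRk M Y).trans_le (M.eRk_le_encard Y))⟩

lemma le_eRk_of_forall_isCircuit {Z : Set α} {j g : ℕ∞}
    (hC : ∀ C, M.IsCircuit C → g ≤ C.encard) (hZ : Z ⊆ M.E) (hjg : j < g)
    (hjZ : j ≤ Z.encard) :
    j ≤ M.eRk Z := by
  obtain ⟨Y, hYZ, hY⟩ := exists_subset_encard_eq hjZ
  have hYi : M.Indep Y := by
    by_contra hnot
    obtain ⟨C, hCY, hC'⟩ := ((not_indep_iff (hYZ.trans hZ)).1 hnot).exists_isCircuit_subset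
    exact ((hC C hC').trans ((encard_le_encard hCY).trans hY.le)).not_gt hjg
  rw [← hY, ← hYi.eRk_eq_encard]
  exact M.eRk_mono hYZ

lemma TConn.of_vertConn (hV : VertConn M k)
    (hC : ∀ C, M.IsCircuit C → (k : ℕ∞) ≤ C.encard) : TConn M k := by
  rintro j X Y hj hjk ⟨hXY, hdisj, hlam, hX, hY⟩
  have hjk' : (j : ℕ∞) < k := by exact_mod_cast hjk
  refine hV j X Y hj hjk ⟨hXY, hdisj, hlam, ?_, ?_⟩ <;> rw [mrk_eq_eRk]
  · exact le_eRk_of_forall_isCircuit hC (hXY ▸ subset_union_left) hjk' hX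
  · exact le_eRk_of_forall_isCircuit hC (hXY ▸ subset_union_right) hjk' hY

end

theorem statement_16_general (k : ℕ) (M : Matroid α) (hu : ¬ IsUniform M) :
    TConn M k ↔ (VertConn M k ∧ ¬ ∃ C, MCircuit M C ∧ C.encard < (k : ℕ∞)) := by
  simp only [mCircuit_iff_isCircuit, not_exists, not_and, not_lt]
  exact ⟨fun h => ⟨h.vertConn, fun C hC => h.le_encard_of_isCircuit hu hC⟩,
    fun ⟨hV, hC⟩ => .of_vertConn hV hC⟩

/-- A non-uniform matroid is `k`-connected if and only if it is vertically `k`-connected and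
has no circuits with fewer than `k` elements. -/
theorem statement_16 (k : ℕ) (hk : 2 ≤ k) (M : Matroid α) (hu : ¬ IsUniform M) :
    TConn M k ↔ (VertConn M k ∧ ¬ ∃ C, MCircuit M C ∧ C.encard < (k : ℕ∞)) :=
  statement_16_general k M hu
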